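/- arXiv:2511.11731 — 4 statements merged into one kernel-verified Lean document; each statement's English description precedes it below -/
import Mathlib

section
/- In the product construction, the linear map J_{a,b} : V₁ × V₂ → V₁ × V₂ satisfies J_{a,b} ∘ J_{a,b} = −id, i.e. J_{a,b} is an almost complex structure on V₁ × V₂, for every a, b ∈ ℝ with b ≠ 0. -/
open scoped RealInnerProductSpace

lemma acms_aux {V : Type*} [NormedAddCommGroup V] [InnerProductSpace ℝ V]
    (φ : V →ₗ[ℝ] V) (ξ : V) (η : V →ₗ[ℝ] ℝ)
    (hηξ : η ξ = 1)
    (hφφ : ∀ X : V, φ (φ X) = -X + η X • ξ)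
    (hmetric : ∀ X Y : V, ⟪φ X, φ Y⟫ = ⟪X, Y⟫ - η X * η Y) :
    φ ξ = 0 ∧ ∀ X, η (φ X) = 0 := by
  have key : ∀ X, η (φ X) • ξ = η X • φ ξ := by
    intro X
    have h1 := hφφ (φ X)
    have h2 : φ (φ (φ X)) = -φ X + η X • φ ξ := by
      rw [congrArg φ (hφφ X)]; simp
    rw [h2] at h1
    exact (add_left_cancel h1.symm)
  have hc : ∀ X, η (φ X) = η X * η (φ ξ) := by
    intro X
    have := congrArg η (key X)
    simpa [hηξ] using this
  set c := η (φ ξ) with hcdef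
  set s : ℝ := ⟪ξ, ξ⟫ with hsdef
  have hφξ : φ ξ = c • ξ := by
    have := key ξ; simpa [hηξ] using this.symm
  have e1 : c * c * s = s - 1 := by
    have := hmetric ξ ξ
    rw [hφξ, real_inner_smul_left, real_inner_smul_right, hηξ] at this
    linarith [this]
  have e2 : c * c = s - 1 := by
    have h0 : φ (φ ξ) = 0 := by rw [hφφ ξ, hηξ]; simp
    have := hmetric (φ ξ) (φ ξ)
    rw [h0, inner_zero_left, hφξ, real_inner_smul_left, real_inner_smul_right,
      map_smul] at this
    simp only [hηξ, smul_eq_mul, mul_one, ← hsdef] at this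
    nlinarith [this, e1]
  have hc0 : c = 0 := by
    have h4 : c * c = 0 := by nlinarith [e1, e2, sq_nonneg c]
    exact mul_self_eq_zero.mp h4
  refine ⟨by rw [hφξ, hc0, zero_smul], fun X => by rw [hc X, hc0, mul_zero]⟩

/-- Product construction: for real inner product spaces `V₁, V₂` with linear almost
contact metric structures `(φᵢ, ξᵢ, ηᵢ)`, and `a b : ℝ` with `b ≠ 0`, the linear map
`J_{a,b}` on `V₁ × V₂` satisfies `J_{a,b} ∘ J_{a,b} = -id`. -/
theorem product_Jab_sq_eq_neg_id
    {V₁ V₂ : Type*} [NormedAddCommGroup V₁] [InnerProductSpace ℝ V₁]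
    [NormedAddCommGroup V₂] [InnerProductSpace ℝ V₂]
    (φ₁ : V₁ →ₗ[ℝ] V₁) (ξ₁ : V₁) (η₁ : V₁ →ₗ[ℝ] ℝ)
    (φ₂ : V₂ →ₗ[ℝ] V₂) (ξ₂ : V₂) (η₂ : V₂ →ₗ[ℝ] ℝ)
    (hηξ₁ : η₁ ξ₁ = 1)
    (hφφ₁ : ∀ X : V₁, φ₁ (φ₁ X) = -X + η₁ X • ξ₁)
    (hmetric₁ : ∀ X Y : V₁, ⟪φ₁ X, φ₁ Y⟫ = ⟪X, Y⟫ - η₁ X * η₁ Y)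
    (hηξ₂ : η₂ ξ₂ = 1)
    (hφφ₂ : ∀ X : V₂, φ₂ (φ₂ X) = -X + η₂ X • ξ₂)
    (hmetric₂ : ∀ X Y : V₂, ⟪φ₂ X, φ₂ Y⟫ = ⟪X, Y⟫ - η₂ X * η₂ Y)
    (a b : ℝ) (hb : b ≠ 0)
    (J : V₁ × V₂ → V₁ × V₂)
    (hJ : ∀ (X₁ : V₁) (X₂ : V₂), J (X₁, X₂) =
      (φ₁ X₁ - ((a / b) * η₁ X₁ + ((a ^ 2 + b ^ 2) / b) * η₂ X₂) • ξ₁,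
       φ₂ X₂ + ((1 / b) * η₁ X₁ + (a / b) * η₂ X₂) • ξ₂)) :
    ∀ p : V₁ × V₂, J (J p) = -p := by
  obtain ⟨hφξ₁, hηφ₁⟩ := acms_aux φ₁ ξ₁ η₁ hηξ₁ hφφ₁ hmetric₁
  obtain ⟨hφξ₂, hηφ₂⟩ := acms_aux φ₂ ξ₂ η₂ hηξ₂ hφφ₂ hmetric₂
  rintro ⟨X₁, X₂⟩
  rw [hJ X₁ X₂, hJ, Prod.neg_mk, Prod.mk.injEq]
  simp only [map_sub, map_add, map_smul, hφφ₁ X₁, hφφ₂ X₂, hφξ₁, hφξ₂,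
    hηφ₁, hηφ₂, hηξ₁, hηξ₂, smul_zero, smul_eq_mul, mul_one, zero_add,
    sub_zero, add_zero, zero_sub, mul_zero]
  constructor <;> (match_scalars <;> field_simp <;> ring)
end

section
/- In the product construction, for every a, b ∈ ℝ with b ≠ 0, the symmetric bilinear form g_{a,b} is positive definite on V₁ × V₂: g_{a,b}((X₁,X₂),(X₁,X₂)) > 0 for every (X₁,X₂) ≠ (0,0). -/
open scoped RealInnerProductSpace

/-- Product construction: for every `a b : ℝ` with `b ≠ 0`, the symmetric bilinear
form `g_{a,b}` is positive definite on `V₁ × V₂`. -/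
theorem product_gab_posDef
    {V₁ V₂ : Type*} [NormedAddCommGroup V₁] [InnerProductSpace ℝ V₁]
    [NormedAddCommGroup V₂] [InnerProductSpace ℝ V₂]
    (φ₁ : V₁ →ₗ[ℝ] V₁) (ξ₁ : V₁) (η₁ : V₁ →ₗ[ℝ] ℝ)
    (φ₂ : V₂ →ₗ[ℝ] V₂) (ξ₂ : V₂) (η₂ : V₂ →ₗ[ℝ] ℝ)
    (hηξ₁ : η₁ ξ₁ = 1)
    (hφφ₁ : ∀ X : V₁, φ₁ (φ₁ X) = -X + η₁ X • ξ₁)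
    (hmetric₁ : ∀ X Y : V₁, ⟪φ₁ X, φ₁ Y⟫ = ⟪X, Y⟫ - η₁ X * η₁ Y)
    (hηξ₂ : η₂ ξ₂ = 1)
    (hφφ₂ : ∀ X : V₂, φ₂ (φ₂ X) = -X + η₂ X • ξ₂)
    (hmetric₂ : ∀ X Y : V₂, ⟪φ₂ X, φ₂ Y⟫ = ⟪X, Y⟫ - η₂ X * η₂ Y)
    (a b : ℝ) (hb : b ≠ 0)
    (g : V₁ × V₂ → V₁ × V₂ → ℝ)
    (hg : ∀ (X₁ Y₁ : V₁) (X₂ Y₂ : V₂), g (X₁, X₂) (Y₁, Y₂) =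
      ⟪X₁, Y₁⟫ + a * (η₁ X₁ * η₂ Y₂ + η₁ Y₁ * η₂ X₂) + ⟪X₂, Y₂⟫
        + (a ^ 2 + b ^ 2 - 1) * (η₂ X₂ * η₂ Y₂)) :
    ∀ p : V₁ × V₂, p ≠ 0 → 0 < g p p := by

  intro p hp
  obtain ⟨X₁, X₂⟩ := p
  have h1 : 0 ≤ ⟪X₁, X₁⟫ - η₁ X₁ * η₁ X₁ := by
    rw [← hmetric₁]; exact real_inner_self_nonneg
  have h2 : 0 ≤ ⟪X₂, X₂⟫ - η₂ X₂ * η₂ X₂ := by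
    rw [← hmetric₂]; exact real_inner_self_nonneg
  have hx : X₁ ≠ 0 ∨ X₂ ≠ 0 := by
    by_contra h
    push_neg at h
    exact hp (by simp [Prod.ext_iff, h.1, h.2])
  have key : g (X₁, X₂) (X₁, X₂) =
      (⟪X₁, X₁⟫ - η₁ X₁ * η₁ X₁) + (⟪X₂, X₂⟫ - η₂ X₂ * η₂ X₂)
        + (η₁ X₁ + a * η₂ X₂) ^ 2 + b ^ 2 * (η₂ X₂) ^ 2 := by
    rw [hg]; ring
  rw [key]
  by_cases ht : η₂ X₂ = 0
  · rw [ht]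
    rcases hx with h | h
    · have hpos : 0 < ⟪X₁, X₁⟫ := lt_of_le_of_ne real_inner_self_nonneg (Ne.symm (inner_self_ne_zero.mpr h))
      nlinarith [sq_nonneg (η₁ X₁)]
    · have hpos : 0 < ⟪X₂, X₂⟫ := lt_of_le_of_ne real_inner_self_nonneg (Ne.symm (inner_self_ne_zero.mpr h))
      nlinarith [sq_nonneg (η₁ X₁)]
  · have hpos : 0 < b ^ 2 * (η₂ X₂) ^ 2 := by positivity
    nlinarith [sq_nonneg (η₁ X₁ + a * η₂ X₂)]
end

section
/- In the product construction, for every a, b ∈ ℝ with b ≠ 0, the almost complex structure J_{a,b} is Hermitian with respect to g_{a,b}: g_{a,b}(J_{a,b}Z, J_{a,b}W) = g_{a,b}(Z, W) for all Z, W ∈ V₁ × V₂. -/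
open scoped RealInnerProductSpace

lemma acs_aux {V : Type*} [NormedAddCommGroup V] [InnerProductSpace ℝ V]
    (φ : V →ₗ[ℝ] V) (ξ : V) (η : V →ₗ[ℝ] ℝ)
    (hηξ : η ξ = 1)
    (hφφ : ∀ X : V, φ (φ X) = -X + η X • ξ)
    (hm : ∀ X Y : V, ⟪φ X, φ Y⟫ = ⟪X, Y⟫ - η X * η Y) :
    (∀ X, η (φ X) = 0) ∧ (∀ X, ⟪φ X, ξ⟫ = 0) ∧ (∀ X, ⟪ξ, φ X⟫ = 0)
      ∧ ⟪ξ, ξ⟫ = (1 : ℝ) := by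
  have hξ0 : ξ ≠ 0 := by
    intro h; rw [h, map_zero] at hηξ; exact zero_ne_one hηξ
  have hφξ2 : φ (φ ξ) = 0 := by rw [hφφ, hηξ, one_smul]; abel
  have eq1 : ∀ X : V, η (φ X) • ξ = η X • φ ξ := by
    intro X
    have h1 : φ (φ (φ X)) = -(φ X) + η (φ X) • ξ := hφφ (φ X)
    have h2 : φ (φ (φ X)) = -(φ X) + η X • φ ξ := by
      rw [hφφ X]; simp [map_add, map_neg, map_smul]
    have := h1.symm.trans h2
    exact add_left_cancel this
  have hφξ : φ ξ = 0 := by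
    have h := eq1 ξ
    rw [hηξ, one_smul] at h
    set c := η (φ ξ) with hc
    have h2 : φ (φ ξ) = (c * c) • ξ := by
      rw [← h, map_smul, ← h, smul_smul]
    rw [hφξ2] at h2
    have : c * c = 0 := by
      by_contra hcc
      exact hξ0 (by simpa [hcc] using (smul_eq_zero.mp h2.symm).resolve_right hξ0)
    have hc0 : c = 0 := by nlinarith
    rw [← h, hc0, zero_smul]
  have hηφ : ∀ X, η (φ X) = 0 := by
    intro X
    have h := eq1 X
    rw [hφξ, smul_zero] at h
    exact (smul_eq_zero.mp h).resolve_right hξ0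
  have hinner : ∀ X, ⟪X, ξ⟫ = η X := by
    intro X
    have h := hm X ξ
    rw [hφξ, inner_zero_right, hηξ, mul_one] at h
    linarith
  refine ⟨hηφ, fun X => by rw [hinner (φ X), hηφ X],
    fun X => by rw [real_inner_comm, hinner (φ X), hηφ X],
    by rw [hinner ξ, hηξ]⟩

/-- Product construction: for every `a b : ℝ` with `b ≠ 0`, the almost complex
structure `J_{a,b}` is Hermitian with respect to `g_{a,b}`:
`g_{a,b}(J_{a,b} Z, J_{a,b} W) = g_{a,b}(Z, W)` for all `Z, W`. -/
theorem product_Jab_hermitian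
    {V₁ V₂ : Type*} [NormedAddCommGroup V₁] [InnerProductSpace ℝ V₁]
    [NormedAddCommGroup V₂] [InnerProductSpace ℝ V₂]
    (φ₁ : V₁ →ₗ[ℝ] V₁) (ξ₁ : V₁) (η₁ : V₁ →ₗ[ℝ] ℝ)
    (φ₂ : V₂ →ₗ[ℝ] V₂) (ξ₂ : V₂) (η₂ : V₂ →ₗ[ℝ] ℝ)
    (hηξ₁ : η₁ ξ₁ = 1)
    (hφφ₁ : ∀ X : V₁, φ₁ (φ₁ X) = -X + η₁ X • ξ₁)
    (hmetric₁ : ∀ X Y : V₁, ⟪φ₁ X, φ₁ Y⟫ = ⟪X, Y⟫ - η₁ X * η₁ Y)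
    (hηξ₂ : η₂ ξ₂ = 1)
    (hφφ₂ : ∀ X : V₂, φ₂ (φ₂ X) = -X + η₂ X • ξ₂)
    (hmetric₂ : ∀ X Y : V₂, ⟪φ₂ X, φ₂ Y⟫ = ⟪X, Y⟫ - η₂ X * η₂ Y)
    (a b : ℝ) (hb : b ≠ 0)
    (J : V₁ × V₂ → V₁ × V₂)
    (hJ : ∀ (X₁ : V₁) (X₂ : V₂), J (X₁, X₂) =
      (φ₁ X₁ - ((a / b) * η₁ X₁ + ((a ^ 2 + b ^ 2) / b) * η₂ X₂) • ξ₁,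
       φ₂ X₂ + ((1 / b) * η₁ X₁ + (a / b) * η₂ X₂) • ξ₂))
    (g : V₁ × V₂ → V₁ × V₂ → ℝ)
    (hg : ∀ (X₁ Y₁ : V₁) (X₂ Y₂ : V₂), g (X₁, X₂) (Y₁, Y₂) =
      ⟪X₁, Y₁⟫ + a * (η₁ X₁ * η₂ Y₂ + η₁ Y₁ * η₂ X₂) + ⟪X₂, Y₂⟫
        + (a ^ 2 + b ^ 2 - 1) * (η₂ X₂ * η₂ Y₂)) :
    ∀ Z W : V₁ × V₂, g (J Z) (J W) = g Z W := by
  obtain ⟨hηφ₁, hφξ₁, hξφ₁, hξξ₁⟩ := acs_aux φ₁ ξ₁ η₁ hηξ₁ hφφ₁ hmetric₁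
  obtain ⟨hηφ₂, hφξ₂, hξφ₂, hξξ₂⟩ := acs_aux φ₂ ξ₂ η₂ hηξ₂ hφφ₂ hmetric₂
  rintro ⟨X₁, X₂⟩ ⟨Y₁, Y₂⟩
  rw [hJ, hJ, hg, hg]
  simp only [inner_sub_left, inner_sub_right, inner_add_left, inner_add_right,
    real_inner_smul_left, real_inner_smul_right, map_sub, map_add, map_smul,
    smul_eq_mul, hmetric₁, hmetric₂, hηφ₁, hηφ₂, hφξ₁, hφξ₂, hξφ₁, hξφ₂,
    hξξ₁, hξξ₂, hηξ₁, hηξ₂]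
  field_simp
  ring
end

section
/- In the smooth product setting, if both smooth almost contact structures (φ₁, ξ₁, η₁) on U₁ and (φ₂, ξ₂, η₂) on U₂ are normal, then for every a, b ∈ ℝ with b ≠ 0 the Nijenhuis tensor of J_{a,b} vanishes: N_{J_{a,b}}(X,Y) = 0 for all smooth vector fields X, Y on U₁ × U₂. -/
open VectorField

/-- The Nijenhuis tensor `N_φ(X,Y)` of a smooth almost contact structure `(φ, ξ, η)`
at a point `x`:
`N_φ(X,Y) = [φX, φY] + φ(φ[X,Y]) − φ[φX, Y] − φ[X, φY] + dη(X,Y)·ξ`, where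
`dη(X,Y) = X(η(Y)) − Y(η(X)) − η([X,Y])`. -/
noncomputable def almostContactNijenhuis {E : Type*} [NormedAddCommGroup E]
    [NormedSpace ℝ E] (φ : E → (E →L[ℝ] E)) (ξ : E → E) (η : E → (E →L[ℝ] ℝ))
    (X Y : E → E) (x : E) : E :=
  lieBracket ℝ (fun y => φ y (X y)) (fun y => φ y (Y y)) x
    + φ x (φ x (lieBracket ℝ X Y x))
    - φ x (lieBracket ℝ (fun y => φ y (X y)) Y x)
    - φ x (lieBracket ℝ X (fun y => φ y (Y y)) x)
    + (fderiv ℝ (fun y => η y (Y y)) x (X x)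
        - fderiv ℝ (fun y => η y (X y)) x (Y x)
        - η x (lieBracket ℝ X Y x)) • ξ x

/-- The Nijenhuis tensor of a (pointwise) endomorphism field `J`:
`N_J(X,Y) = [JX, JY] + J(J[X,Y]) − J[JX, Y] − J[X, JY]`. -/
noncomputable def endNijenhuis {F : Type*} [NormedAddCommGroup F] [NormedSpace ℝ F]
    (J : F → F → F) (X Y : F → F) (x : F) : F :=
  lieBracket ℝ (fun p => J p (X p)) (fun p => J p (Y p)) x
    + J x (J x (lieBracket ℝ X Y x))
    - J x (lieBracket ℝ (fun p => J p (X p)) Y x)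
    - J x (lieBracket ℝ X (fun p => J p (Y p)) x)

/-!
Both Nijenhuis tensors are tensorial: at a point they only depend on the values of the vector
fields and on the first derivatives of the structure tensors (`jetNijenhuis`). Normality of a
factor therefore amounts to pointwise identities between `φ, ξ, η` and their derivatives
(`IsNormalAlmostContactJet`), among them `dη(φu, v) + dη(u, φv) = 0`. Expanding `N_J` at a point
of the product, the `φᵢ`-parts reduce by normality to multiples of `ξᵢ`, and all terms along
`ξ₁, ξ₂` cancel because `J` acts on `span {ξ₁, ξ₂}` by the matrix `[[-α, -β], [γ, α]]`, whose
square is `-1` exactly when `βγ = α² + 1`. For `J_{a,b}`, `α = a/b`, `β = (a² + b²)/b`, `γ = 1/b`.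
-/

open ContinuousLinearMap Filter Topology

section Tensoriality

variable {F : Type*} [NormedAddCommGroup F] [NormedSpace ℝ F]

noncomputable def jetNijenhuis (J : F →L[ℝ] F) (DJ : F →L[ℝ] F →L[ℝ] F) (u v : F) : F :=
  DJ (J u) v - DJ (J v) u + J (DJ v u) - J (DJ u v)

theorem endNijenhuis_eq_jetNijenhuis {J : F → F →L[ℝ] F} {DJ : F →L[ℝ] F →L[ℝ] F}
    {X Y : F → F} {x : F}
    (hJ : HasFDerivAt J DJ x) (hX : DifferentiableAt ℝ X x) (hY : DifferentiableAt ℝ Y x) :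
    endNijenhuis (fun p v => J p v) X Y x = jetNijenhuis (J x) DJ (X x) (Y x) := by
  have hJX := (hJ.clm_apply hX.hasFDerivAt).fderiv
  have hJY := (hJ.clm_apply hY.hasFDerivAt).fderiv
  simp only [endNijenhuis, jetNijenhuis, lieBracket, hJX, hJY, add_apply, comp_apply,
    flip_apply, map_sub, map_add]
  abel

theorem almostContactNijenhuis_eq_jetNijenhuis {φ : F → F →L[ℝ] F} {ξ : F → F}
    {η : F → F →L[ℝ] ℝ} {Dφ : F →L[ℝ] F →L[ℝ] F} {Dη : F →L[ℝ] F →L[ℝ] ℝ}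
    {X Y : F → F} {x : F} (hφ : HasFDerivAt φ Dφ x) (hη : HasFDerivAt η Dη x)
    (hX : DifferentiableAt ℝ X x) (hY : DifferentiableAt ℝ Y x) :
    almostContactNijenhuis φ ξ η X Y x =
      jetNijenhuis (φ x) Dφ (X x) (Y x) + (Dη (X x) (Y x) - Dη (Y x) (X x)) • ξ x := by
  rw [← endNijenhuis_eq_jetNijenhuis hφ hX hY]
  have hηX := (hη.clm_apply hX.hasFDerivAt).fderiv
  have hηY := (hη.clm_apply hY.hasFDerivAt).fderiv
  simp only [almostContactNijenhuis, endNijenhuis, lieBracket, hηX, hηY, add_apply,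
    comp_apply, flip_apply, map_sub]
  congr 2
  ring

end Tensoriality

theorem HasFDerivAt.clm_apply_add_eq_zero {E F G : Type*} [NormedAddCommGroup E]
    [NormedSpace ℝ E] [NormedAddCommGroup F] [NormedSpace ℝ F] [NormedAddCommGroup G]
    [NormedSpace ℝ G]
    {A : E → F →L[ℝ] G} {B : E → F} {A' : E →L[ℝ] F →L[ℝ] G} {B' : E →L[ℝ] F} {x : E} {c : G}
    (hA : HasFDerivAt A A' x) (hB : HasFDerivAt B B' x) (hc : ∀ᶠ p in 𝓝 x, A p (B p) = c)
    (w : E) : A x (B' w) + A' w (B x) = 0 := by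
  have h := (hA.clm_apply hB).unique ((hasFDerivAt_const c x).congr_of_eventuallyEq hc)
  simpa using congr($h w)

section Algebra

variable {K V : Type*} [Field K] [AddCommGroup V] [Module K V] {φ : V →ₗ[K] V} {ξ : V}
  {η : V →ₗ[K] K}

theorem phi_xi_eq_zero (hηξ : η ξ = 1) (hφφ : ∀ v, φ (φ v) = -v + η v • ξ) : φ ξ = 0 := by
  have hφφξ : φ (φ ξ) = 0 := by simp [hφφ, hηξ]
  have hφξ : φ ξ = η (φ ξ) • ξ := by
    have := hφφ (φ ξ)
    rw [hφφξ, map_zero] at this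
    exact neg_add_eq_zero.mp this.symm
  have hsq : (η (φ ξ) * η (φ ξ)) • ξ = 0 := by
    rw [← smul_smul, ← hφξ, ← map_smul, ← hφξ, hφφξ]
  have : η (φ ξ) * η (φ ξ) = 0 := by simpa [hηξ] using congr(η $hsq)
  rw [hφξ, mul_self_eq_zero.mp this, zero_smul]

theorem eta_phi_eq_zero (hηξ : η ξ = 1) (hφφ : ∀ v, φ (φ v) = -v + η v • ξ) (v : V) :
    η (φ v) = 0 := by
  have hφξ := phi_xi_eq_zero hηξ hφφ
  have : η (φ v) • ξ = 0 := by
    have := hφφ (φ v)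
    rw [hφφ v, map_add, map_neg, map_smul, hφξ, smul_zero, add_zero] at this
    simpa using this
  simpa [hηξ] using congr(η $this)

end Algebra

section Jet

variable {E : Type*} [NormedAddCommGroup E] [NormedSpace ℝ E]

structure IsNormalAlmostContactJet (φ : E →L[ℝ] E) (ξ : E) (η : E →L[ℝ] ℝ)
    (Dφ : E →L[ℝ] E →L[ℝ] E) (Dξ : E →L[ℝ] E) (Dη : E →L[ℝ] E →L[ℝ] ℝ) : Prop where
  eta_xi : η ξ = 1
  phi_phi : ∀ v, φ (φ v) = -v + η v • ξ
  eta_dxi : ∀ w, η (Dξ w) = -Dη w ξ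
  dphi_xi : ∀ w, Dφ w ξ = -φ (Dξ w)
  eta_dphi : ∀ w v, η (Dφ w v) = -Dη w (φ v)
  normal : ∀ u v, jetNijenhuis φ Dφ u v + (Dη u v - Dη v u) • ξ = 0

theorem isNormalAlmostContactJet_fderiv {φ : E → E →L[ℝ] E} {ξ : E → E} {η : E → E →L[ℝ] ℝ}
    {x : E} (hφ : DifferentiableAt ℝ φ x) (hξ : DifferentiableAt ℝ ξ x)
    (hη : DifferentiableAt ℝ η x) (hηξ : ∀ᶠ p in 𝓝 x, η p (ξ p) = 1)
    (hφφ : ∀ᶠ p in 𝓝 x, ∀ v, φ p (φ p v) = -v + η p v • ξ p)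
    (hN : ∀ u v, almostContactNijenhuis φ ξ η (fun _ => u) (fun _ => v) x = 0) :
    IsNormalAlmostContactJet (φ x) (ξ x) (η x) (fderiv ℝ φ x) (fderiv ℝ ξ x)
      (fderiv ℝ η x) := by
  have hφξ : ∀ᶠ p in 𝓝 x, φ p (ξ p) = 0 := by
    filter_upwards [hηξ, hφφ] with p h₁ h₂
    exact phi_xi_eq_zero (φ := (φ p : E →ₗ[ℝ] E)) h₁ h₂
  have hηφ (v : E) : ∀ᶠ p in 𝓝 x, η p (φ p v) = 0 := by
    filter_upwards [hηξ, hφφ] with p h₁ h₂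
    exact eta_phi_eq_zero (φ := (φ p : E →ₗ[ℝ] E)) (η := (η p : E →ₗ[ℝ] ℝ)) h₁ h₂ v
  refine ⟨hηξ.self_of_nhds, hφφ.self_of_nhds, fun w => ?_, fun w => ?_, fun w v => ?_,
    fun u v => ?_⟩
  · linear_combination hη.hasFDerivAt.clm_apply_add_eq_zero hξ.hasFDerivAt hηξ w
  · linear_combination (norm := module)
      hφ.hasFDerivAt.clm_apply_add_eq_zero hξ.hasFDerivAt hφξ w
  · have := hη.hasFDerivAt.clm_apply_add_eq_zero
      (hφ.hasFDerivAt.clm_apply (hasFDerivAt_const v x)) (hηφ v) w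
    simp only [comp_zero, zero_add, flip_apply] at this
    linear_combination this
  · simpa [almostContactNijenhuis_eq_jetNijenhuis hφ.hasFDerivAt hη.hasFDerivAt] using hN u v

end Jet

namespace IsNormalAlmostContactJet

variable {E : Type*} [NormedAddCommGroup E] [NormedSpace ℝ E] {φ : E →L[ℝ] E} {ξ : E}
  {η : E →L[ℝ] ℝ} {Dφ : E →L[ℝ] E →L[ℝ] E} {Dξ : E →L[ℝ] E} {Dη : E →L[ℝ] E →L[ℝ] ℝ}
  (j : IsNormalAlmostContactJet φ ξ η Dφ Dξ Dη)
include j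

theorem phi_xi : φ ξ = 0 :=
  phi_xi_eq_zero (φ := (φ : E →ₗ[ℝ] E)) j.eta_xi j.phi_phi

theorem eta_phi (v : E) : η (φ v) = 0 :=
  eta_phi_eq_zero (φ := (φ : E →ₗ[ℝ] E)) (η := (η : E →ₗ[ℝ] ℝ)) j.eta_xi j.phi_phi v

theorem normal_xi (v : E) :
    φ (Dξ (φ v)) + Dξ v - η (Dξ v) • ξ - φ (Dφ ξ v) + (Dη ξ v - Dη v ξ) • ξ = 0 := by
  have h := j.normal ξ v
  simp only [jetNijenhuis, j.phi_xi, map_zero, zero_apply, j.dphi_xi, map_neg,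
    j.phi_phi] at h
  linear_combination (norm := module) h

theorem deta_xi (v : E) : Dη ξ v = Dη v ξ := by
  have h := congr(η $(j.normal_xi v))
  simp only [map_add, map_sub, map_smul, map_zero, smul_eq_mul, j.eta_xi, j.eta_phi] at h
  linarith

theorem dphi_xi_left (v : E) : Dφ ξ v = Dξ (φ v) - φ (Dξ v) := by
  have h := congr(φ $(j.normal_xi v))
  simp only [map_add, map_sub, map_smul, map_zero, j.phi_xi, smul_zero, j.phi_phi,
    j.eta_dxi, j.eta_dphi, j.deta_xi] at h
  linear_combination (norm := module) h

theorem deta_phi (u v : E) :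
    (Dη (φ u) v - Dη v (φ u)) + (Dη u (φ v) - Dη (φ v) u) = 0 := by
  have h := congr(η $(j.normal (φ u) v))
  simp only [jetNijenhuis, map_add, map_sub, map_smul, map_zero, smul_eq_mul, j.eta_xi,
    j.eta_phi, j.eta_dphi, j.phi_phi, map_neg, neg_apply, add_apply, smul_apply,
    j.deta_xi] at h
  linarith

end IsNormalAlmostContactJet

section Product

variable {E₁ E₂ : Type*} [NormedAddCommGroup E₁] [NormedSpace ℝ E₁] [NormedAddCommGroup E₂]
  [NormedSpace ℝ E₂]

noncomputable def prodStructure (α β γ : ℝ) (φ₁ : E₁ →L[ℝ] E₁) (ξ₁ : E₁) (η₁ : E₁ →L[ℝ] ℝ)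
    (φ₂ : E₂ →L[ℝ] E₂) (ξ₂ : E₂) (η₂ : E₂ →L[ℝ] ℝ) : E₁ × E₂ →L[ℝ] E₁ × E₂ :=
  (φ₁.comp (fst ℝ E₁ E₂)
      - (α • η₁.comp (fst ℝ E₁ E₂) + β • η₂.comp (snd ℝ E₁ E₂)).smulRight ξ₁).prod
    (φ₂.comp (snd ℝ E₁ E₂)
      + (γ • η₁.comp (fst ℝ E₁ E₂) + α • η₂.comp (snd ℝ E₁ E₂)).smulRight ξ₂)

@[simp]
theorem prodStructure_apply (α β γ : ℝ) (φ₁ : E₁ →L[ℝ] E₁) (ξ₁ : E₁) (η₁ : E₁ →L[ℝ] ℝ)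
    (φ₂ : E₂ →L[ℝ] E₂) (ξ₂ : E₂) (η₂ : E₂ →L[ℝ] ℝ) (v : E₁ × E₂) :
    prodStructure α β γ φ₁ ξ₁ η₁ φ₂ ξ₂ η₂ v =
      (φ₁ v.1 - (α * η₁ v.1 + β * η₂ v.2) • ξ₁, φ₂ v.2 + (γ * η₁ v.1 + α * η₂ v.2) • ξ₂) :=
  rfl

variable {φ₁ : E₁ →L[ℝ] E₁} {ξ₁ : E₁} {η₁ : E₁ →L[ℝ] ℝ} {Dφ₁ : E₁ →L[ℝ] E₁ →L[ℝ] E₁}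
  {Dξ₁ : E₁ →L[ℝ] E₁} {Dη₁ : E₁ →L[ℝ] E₁ →L[ℝ] ℝ}
  {φ₂ : E₂ →L[ℝ] E₂} {ξ₂ : E₂} {η₂ : E₂ →L[ℝ] ℝ} {Dφ₂ : E₂ →L[ℝ] E₂ →L[ℝ] E₂}
  {Dξ₂ : E₂ →L[ℝ] E₂} {Dη₂ : E₂ →L[ℝ] E₂ →L[ℝ] ℝ}

theorem jetNijenhuis_prodStructure_eq_zero {α β γ : ℝ} (hαβγ : β * γ = α ^ 2 + 1)
    (j₁ : IsNormalAlmostContactJet φ₁ ξ₁ η₁ Dφ₁ Dξ₁ Dη₁)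
    (j₂ : IsNormalAlmostContactJet φ₂ ξ₂ η₂ Dφ₂ Dξ₂ Dη₂)
    {DJ : E₁ × E₂ →L[ℝ] E₁ × E₂ →L[ℝ] E₁ × E₂}
    (hDJ : ∀ w v, DJ w v =
      (Dφ₁ w.1 v.1 - (α * Dη₁ w.1 v.1 + β * Dη₂ w.2 v.2) • ξ₁
          - (α * η₁ v.1 + β * η₂ v.2) • Dξ₁ w.1,
        Dφ₂ w.2 v.2 + (γ * Dη₁ w.1 v.1 + α * Dη₂ w.2 v.2) • ξ₂
          + (γ * η₁ v.1 + α * η₂ v.2) • Dξ₂ w.2)) (u v : E₁ × E₂) :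
    jetNijenhuis (prodStructure α β γ φ₁ ξ₁ η₁ φ₂ ξ₂ η₂) DJ u v = 0 := by
  have n₁ := j₁.normal u.1 v.1
  have n₂ := j₂.normal u.2 v.2
  simp only [jetNijenhuis] at n₁ n₂ ⊢
  simp only [hDJ, prodStructure_apply, map_add, map_sub, map_smul, smul_eq_mul, add_apply,
    sub_apply, smul_apply, j₁.phi_xi, j₂.phi_xi, j₁.eta_xi, j₂.eta_xi, j₁.eta_dxi, j₂.eta_dxi,
    j₁.eta_dphi, j₂.eta_dphi, j₁.deta_xi, j₂.deta_xi, j₁.dphi_xi_left, j₂.dphi_xi_left,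
    smul_zero, add_zero, mul_one]
  rw [Prod.ext_iff]
  simp only [Prod.fst_zero, Prod.snd_zero, Prod.fst_add, Prod.fst_sub, Prod.snd_add,
    Prod.snd_sub]
  constructor
  · linear_combination (norm := match_scalars <;> ring1) n₁
      + j₁.deta_phi u.1 v.1 • ((-α) • ξ₁) + j₂.deta_phi u.2 v.2 • ((-β) • ξ₁)
      + hαβγ • ((Dη₁ u.1 v.1 - Dη₁ v.1 u.1) • ξ₁)
  · linear_combination (norm := match_scalars <;> ring1) n₂
      + j₁.deta_phi u.1 v.1 • (γ • ξ₂) + j₂.deta_phi u.2 v.2 • (α • ξ₂)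
      + hαβγ • ((Dη₂ u.2 v.2 - Dη₂ v.2 u.2) • ξ₂)

end Product

section ProductDeriv

variable {E₁ E₂ : Type*} [NormedAddCommGroup E₁] [NormedSpace ℝ E₁] [NormedAddCommGroup E₂]
  [NormedSpace ℝ E₂] {φ₁ : E₁ → E₁ →L[ℝ] E₁} {ξ₁ : E₁ → E₁} {η₁ : E₁ → E₁ →L[ℝ] ℝ}
  {φ₂ : E₂ → E₂ →L[ℝ] E₂} {ξ₂ : E₂ → E₂} {η₂ : E₂ → E₂ →L[ℝ] ℝ} {x : E₁ × E₂}
  (hφ₁ : DifferentiableAt ℝ φ₁ x.1) (hξ₁ : DifferentiableAt ℝ ξ₁ x.1)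
  (hη₁ : DifferentiableAt ℝ η₁ x.1) (hφ₂ : DifferentiableAt ℝ φ₂ x.2)
  (hξ₂ : DifferentiableAt ℝ ξ₂ x.2) (hη₂ : DifferentiableAt ℝ η₂ x.2)
include hφ₁ hξ₁ hη₁ hφ₂ hξ₂ hη₂

theorem differentiableAt_prodStructure (α β γ : ℝ) :
    DifferentiableAt ℝ (fun p : E₁ × E₂ =>
      prodStructure α β γ (φ₁ p.1) (ξ₁ p.1) (η₁ p.1) (φ₂ p.2) (ξ₂ p.2) (η₂ p.2)) x := by
  have h₁ : DifferentiableAt ℝ (fun p : E₁ × E₂ => (φ₁ p.1).comp (fst ℝ E₁ E₂) -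
      (α • (η₁ p.1).comp (fst ℝ E₁ E₂) + β • (η₂ p.2).comp (snd ℝ E₁ E₂)).smulRight (ξ₁ p.1))
      x := by
    fun_prop
  have h₂ : DifferentiableAt ℝ (fun p : E₁ × E₂ => (φ₂ p.2).comp (snd ℝ E₁ E₂) +
      (γ • (η₁ p.1).comp (fst ℝ E₁ E₂) + α • (η₂ p.2).comp (snd ℝ E₁ E₂)).smulRight (ξ₂ p.2))
      x := by
    fun_prop
  exact (prodL ℝ).differentiableAt.comp x (h₁.prodMk h₂)

theorem fderiv_prodStructure_apply (α β γ : ℝ) (w v : E₁ × E₂) :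
    fderiv ℝ (fun p : E₁ × E₂ =>
      prodStructure α β γ (φ₁ p.1) (ξ₁ p.1) (η₁ p.1) (φ₂ p.2) (ξ₂ p.2) (η₂ p.2)) x w v =
      (fderiv ℝ φ₁ x.1 w.1 v.1
          - (α * fderiv ℝ η₁ x.1 w.1 v.1 + β * fderiv ℝ η₂ x.2 w.2 v.2) • ξ₁ x.1
          - (α * η₁ x.1 v.1 + β * η₂ x.2 v.2) • fderiv ℝ ξ₁ x.1 w.1,
        fderiv ℝ φ₂ x.2 w.2 v.2
          + (γ * fderiv ℝ η₁ x.1 w.1 v.1 + α * fderiv ℝ η₂ x.2 w.2 v.2) • ξ₂ x.2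
          + (γ * η₁ x.1 v.1 + α * η₂ x.2 v.2) • fderiv ℝ ξ₂ x.2 w.2) := by
  have hJ := (differentiableAt_prodStructure hφ₁ hξ₁ hη₁ hφ₂ hξ₂ hη₂ α β γ).hasFDerivAt
  have hJv := hJ.clm_apply (hasFDerivAt_const v x)
  have dφ₁ := hφ₁.hasFDerivAt.comp x hasFDerivAt_fst
  have dξ₁ := hξ₁.hasFDerivAt.comp x hasFDerivAt_fst
  have dη₁ := hη₁.hasFDerivAt.comp x hasFDerivAt_fst
  have dφ₂ := hφ₂.hasFDerivAt.comp x hasFDerivAt_snd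
  have dξ₂ := hξ₂.hasFDerivAt.comp x hasFDerivAt_snd
  have dη₂ := hη₂.hasFDerivAt.comp x hasFDerivAt_snd
  have hv₁ := hasFDerivAt_const (𝕜 := ℝ) v.1 x
  have hv₂ := hasFDerivAt_const (𝕜 := ℝ) v.2 x
  have hs₁ := ((dη₁.clm_apply hv₁).const_mul α).add ((dη₂.clm_apply hv₂).const_mul β)
  have hs₂ := ((dη₁.clm_apply hv₁).const_mul γ).add ((dη₂.clm_apply hv₂).const_mul α)
  have hJ' := ((dφ₁.clm_apply hv₁).sub (hs₁.smul dξ₁)).prodMk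
    ((dφ₂.clm_apply hv₂).add (hs₂.smul dξ₂))
  have := congr($(hJv.unique hJ') w)
  simp only [comp_zero, zero_add, flip_apply, Function.comp_apply, Pi.add_apply, prod_apply,
    sub_apply, comp_apply, coe_fst', add_apply, smul_apply, smulRight_apply, smul_eq_mul,
    coe_snd'] at this
  rw [this, Prod.mk.injEq]
  constructor <;> abel

end ProductDeriv

theorem normal_implies_Jab_nijenhuis_vanishes_general
    {E₁ E₂ : Type*} [NormedAddCommGroup E₁] [NormedSpace ℝ E₁]
    [NormedAddCommGroup E₂] [NormedSpace ℝ E₂]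
    (U₁ : Set E₁) (hU₁ : IsOpen U₁) (U₂ : Set E₂) (hU₂ : IsOpen U₂)
    (φ₁ : E₁ → (E₁ →L[ℝ] E₁)) (ξ₁ : E₁ → E₁) (η₁ : E₁ → (E₁ →L[ℝ] ℝ))
    (φ₂ : E₂ → (E₂ →L[ℝ] E₂)) (ξ₂ : E₂ → E₂) (η₂ : E₂ → (E₂ →L[ℝ] ℝ))
    (hφ₁ : ContDiffOn ℝ (⊤ : ℕ∞) φ₁ U₁) (hξ₁ : ContDiffOn ℝ (⊤ : ℕ∞) ξ₁ U₁)
    (hη₁ : ContDiffOn ℝ (⊤ : ℕ∞) η₁ U₁)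
    (hφ₂ : ContDiffOn ℝ (⊤ : ℕ∞) φ₂ U₂) (hξ₂ : ContDiffOn ℝ (⊤ : ℕ∞) ξ₂ U₂)
    (hη₂ : ContDiffOn ℝ (⊤ : ℕ∞) η₂ U₂)
    (hηξ₁ : ∀ x ∈ U₁, η₁ x (ξ₁ x) = 1)
    (hφφ₁ : ∀ x ∈ U₁, ∀ v : E₁, φ₁ x (φ₁ x v) = -v + η₁ x v • ξ₁ x)
    (hηξ₂ : ∀ x ∈ U₂, η₂ x (ξ₂ x) = 1)
    (hφφ₂ : ∀ x ∈ U₂, ∀ v : E₂, φ₂ x (φ₂ x v) = -v + η₂ x v • ξ₂ x)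
    (hnormal₁ : ∀ X Y : E₁ → E₁,
      ContDiffOn ℝ (⊤ : ℕ∞) X U₁ → ContDiffOn ℝ (⊤ : ℕ∞) Y U₁ →
      ∀ x ∈ U₁, almostContactNijenhuis φ₁ ξ₁ η₁ X Y x = 0)
    (hnormal₂ : ∀ X Y : E₂ → E₂,
      ContDiffOn ℝ (⊤ : ℕ∞) X U₂ → ContDiffOn ℝ (⊤ : ℕ∞) Y U₂ →
      ∀ x ∈ U₂, almostContactNijenhuis φ₂ ξ₂ η₂ X Y x = 0)
    (a b : ℝ) (hb : b ≠ 0)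
    (J : E₁ × E₂ → E₁ × E₂ → E₁ × E₂)
    (hJ : ∀ (p : E₁ × E₂) (v : E₁ × E₂), J p v =
      (φ₁ p.1 v.1 - ((a / b) * η₁ p.1 v.1 + ((a ^ 2 + b ^ 2) / b) * η₂ p.2 v.2) • ξ₁ p.1,
       φ₂ p.2 v.2 + ((1 / b) * η₁ p.1 v.1 + (a / b) * η₂ p.2 v.2) • ξ₂ p.2)) :
    ∀ X Y : E₁ × E₂ → E₁ × E₂,
      ContDiffOn ℝ (⊤ : ℕ∞) X (U₁ ×ˢ U₂) → ContDiffOn ℝ (⊤ : ℕ∞) Y (U₁ ×ˢ U₂) →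
      ∀ x ∈ U₁ ×ˢ U₂, endNijenhuis J X Y x = 0 := by
  intro X Y hX hY x hx
  have hx₁ : U₁ ∈ 𝓝 x.1 := hU₁.mem_nhds hx.1
  have hx₂ : U₂ ∈ 𝓝 x.2 := hU₂.mem_nhds hx.2
  have dφ₁ := (hφ₁.contDiffAt hx₁).differentiableAt (by simp)
  have dξ₁ := (hξ₁.contDiffAt hx₁).differentiableAt (by simp)
  have dη₁ := (hη₁.contDiffAt hx₁).differentiableAt (by simp)
  have dφ₂ := (hφ₂.contDiffAt hx₂).differentiableAt (by simp)
  have dξ₂ := (hξ₂.contDiffAt hx₂).differentiableAt (by simp)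
  have dη₂ := (hη₂.contDiffAt hx₂).differentiableAt (by simp)
  have jet₁ := isNormalAlmostContactJet_fderiv dφ₁ dξ₁ dη₁ (eventually_of_mem hx₁ hηξ₁)
    (eventually_of_mem hx₁ hφφ₁)
    fun u v => hnormal₁ _ _ contDiffOn_const contDiffOn_const _ hx.1
  have jet₂ := isNormalAlmostContactJet_fderiv dφ₂ dξ₂ dη₂ (eventually_of_mem hx₂ hηξ₂)
    (eventually_of_mem hx₂ hφφ₂)
    fun u v => hnormal₂ _ _ contDiffOn_const contDiffOn_const _ hx.2
  obtain rfl : J = fun p v => prodStructure (a / b) ((a ^ 2 + b ^ 2) / b) (1 / b)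
      (φ₁ p.1) (ξ₁ p.1) (η₁ p.1) (φ₂ p.2) (ξ₂ p.2) (η₂ p.2) v := funext₂ hJ
  have hxU : U₁ ×ˢ U₂ ∈ 𝓝 x := (hU₁.prod hU₂).mem_nhds hx
  rw [endNijenhuis_eq_jetNijenhuis
    (differentiableAt_prodStructure dφ₁ dξ₁ dη₁ dφ₂ dξ₂ dη₂ _ _ _).hasFDerivAt
    ((hX.contDiffAt hxU).differentiableAt (by simp))
    ((hY.contDiffAt hxU).differentiableAt (by simp))]
  refine jetNijenhuis_prodStructure_eq_zero ?_ jet₁ jet₂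
    (fderiv_prodStructure_apply dφ₁ dξ₁ dη₁ dφ₂ dξ₂ dη₂ _ _ _) _ _
  field_simp

/-- If both smooth almost contact structures `(φ₁, ξ₁, η₁)` on `U₁` and
`(φ₂, ξ₂, η₂)` on `U₂` are normal, then for every `a, b ∈ ℝ` with `b ≠ 0`, the
Nijenhuis tensor of the almost complex structure `J_{a,b}` on `U₁ × U₂` vanishes. -/
theorem normal_implies_Jab_nijenhuis_vanishes
    {E₁ E₂ : Type*} [NormedAddCommGroup E₁] [NormedSpace ℝ E₁] [FiniteDimensional ℝ E₁]
    [NormedAddCommGroup E₂] [NormedSpace ℝ E₂] [FiniteDimensional ℝ E₂]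
    (U₁ : Set E₁) (hU₁ : IsOpen U₁) (U₂ : Set E₂) (hU₂ : IsOpen U₂)
    (φ₁ : E₁ → (E₁ →L[ℝ] E₁)) (ξ₁ : E₁ → E₁) (η₁ : E₁ → (E₁ →L[ℝ] ℝ))
    (φ₂ : E₂ → (E₂ →L[ℝ] E₂)) (ξ₂ : E₂ → E₂) (η₂ : E₂ → (E₂ →L[ℝ] ℝ))
    (hφ₁ : ContDiffOn ℝ (⊤ : ℕ∞) φ₁ U₁) (hξ₁ : ContDiffOn ℝ (⊤ : ℕ∞) ξ₁ U₁)
    (hη₁ : ContDiffOn ℝ (⊤ : ℕ∞) η₁ U₁)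
    (hφ₂ : ContDiffOn ℝ (⊤ : ℕ∞) φ₂ U₂) (hξ₂ : ContDiffOn ℝ (⊤ : ℕ∞) ξ₂ U₂)
    (hη₂ : ContDiffOn ℝ (⊤ : ℕ∞) η₂ U₂)
    (hηξ₁ : ∀ x ∈ U₁, η₁ x (ξ₁ x) = 1)
    (hφφ₁ : ∀ x ∈ U₁, ∀ v : E₁, φ₁ x (φ₁ x v) = -v + η₁ x v • ξ₁ x)
    (hηξ₂ : ∀ x ∈ U₂, η₂ x (ξ₂ x) = 1)
    (hφφ₂ : ∀ x ∈ U₂, ∀ v : E₂, φ₂ x (φ₂ x v) = -v + η₂ x v • ξ₂ x)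
    (hnormal₁ : ∀ X Y : E₁ → E₁,
      ContDiffOn ℝ (⊤ : ℕ∞) X U₁ → ContDiffOn ℝ (⊤ : ℕ∞) Y U₁ →
      ∀ x ∈ U₁, almostContactNijenhuis φ₁ ξ₁ η₁ X Y x = 0)
    (hnormal₂ : ∀ X Y : E₂ → E₂,
      ContDiffOn ℝ (⊤ : ℕ∞) X U₂ → ContDiffOn ℝ (⊤ : ℕ∞) Y U₂ →
      ∀ x ∈ U₂, almostContactNijenhuis φ₂ ξ₂ η₂ X Y x = 0)
    (a b : ℝ) (hb : b ≠ 0)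
    (J : E₁ × E₂ → E₁ × E₂ → E₁ × E₂)
    (hJ : ∀ (p : E₁ × E₂) (v : E₁ × E₂), J p v =
      (φ₁ p.1 v.1 - ((a / b) * η₁ p.1 v.1 + ((a ^ 2 + b ^ 2) / b) * η₂ p.2 v.2) • ξ₁ p.1,
       φ₂ p.2 v.2 + ((1 / b) * η₁ p.1 v.1 + (a / b) * η₂ p.2 v.2) • ξ₂ p.2)) :
    ∀ X Y : E₁ × E₂ → E₁ × E₂,
      ContDiffOn ℝ (⊤ : ℕ∞) X (U₁ ×ˢ U₂) → ContDiffOn ℝ (⊤ : ℕ∞) Y (U₁ ×ˢ U₂) →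
      ∀ x ∈ U₁ ×ˢ U₂, endNijenhuis J X Y x = 0 :=
  normal_implies_Jab_nijenhuis_vanishes_general U₁ hU₁ U₂ hU₂ φ₁ ξ₁ η₁ φ₂ ξ₂ η₂ hφ₁ hξ₁ hη₁ hφ₂ hξ₂
    hη₂ hηξ₁ hφφ₁ hηξ₂ hφφ₂ hnormal₁ hnormal₂ a b hb J hJ
end
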